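/- arXiv:1811.00512 — 3 statements merged into one kernel-verified Lean document; each statement's English description precedes it below -/
import Mathlib

section
/- Let c₁ ≤ c₂ ≤ ... ≤ cₙ be real costs and s₁, ..., sₙ real scores, with n > k ≥ 1. Suppose a set b' ⊆ {1,...,n} with |b'| = k is chosen so that every index in b' has score at least as large as every index not in b' (i.e., b' consists of k top-scoring indices). Define the cost increase c(b,b') = min_{i∈b'} cᵢ − c₁. Then c(b,b') ≤ max(0, δ_{k+1}, ..., δₙ), where δⱼ = (cⱼ − c₁)(sⱼ − s₁ + 1). -/
/-!
If the lowest-cost index `0` is in the beam, the cost increase is `≤ 0`. Otherwise the `k`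
beam indices avoid `0`, so by pigeonhole one of them, `j`, satisfies `k ≤ j`. Then `c₀ ≤ c_j`
by sortedness and `s₀ ≤ s_j` because `j` is in the beam and `0` is not, so
`min_{i∈b'} cᵢ − c₀ ≤ c_j − c₀ ≤ (c_j − c₀)(s_j − s₀ + 1) = δ_j`.
-/

open Finset

theorem Fin.exists_mem_card_le_val {n : ℕ} (s : Finset (Fin n)) (hs : s.Nonempty)
    (h0 : ∀ i ∈ s, (i : ℕ) ≠ 0) : ∃ j ∈ s, s.card ≤ (j : ℕ) := by
  by_contra! hlt
  have hsub : s.map Fin.valEmbedding ⊆ Ioo 0 s.card := by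
    intro x hx
    obtain ⟨i, hi, rfl⟩ := mem_map.1 hx
    exact mem_Ioo.2 ⟨Nat.pos_of_ne_zero (h0 i hi), hlt i hi⟩
  have := card_le_card hsub
  simp only [card_map, Nat.card_Ioo] at this
  have := hs.card_pos
  omega

/-- Upper-bound property of the "upper bound" surrogate loss: if costs are sorted
increasingly, and `b'` is a set of `k` top-scoring indices, then the cost increase
`min_{i∈b'} cᵢ − c₁` is at most `max(0, δ_{k+1}, ..., δ_n)` where
`δⱼ = (cⱼ − c₁)(sⱼ − s₁ + 1)`. -/
theorem stmt4 (n k : ℕ) (hkn : k < n)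
    (c s : Fin n → ℝ) (hc : Monotone c)
    (b' : Finset (Fin n)) (hb : b'.Nonempty) (hcard : b'.card = k)
    (htop : ∀ i ∈ b', ∀ j ∉ b', s j ≤ s i)
    (hJ : (Finset.univ.filter fun j : Fin n => k ≤ (j : ℕ)).Nonempty) :
    b'.inf' hb c - c ⟨0, by omega⟩ ≤
      max 0 ((Finset.univ.filter fun j : Fin n => k ≤ (j : ℕ)).sup' hJ
        fun j => (c j - c ⟨0, by omega⟩) * (s j - s ⟨0, by omega⟩ + 1)) := by
  set z : Fin n := ⟨0, by omega⟩
  by_cases hz : z ∈ b'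
  · exact (sub_nonpos.2 (inf'_le c hz)).trans (le_max_left _ _)
  obtain ⟨j, hjb, hkj⟩ :=
    Fin.exists_mem_card_le_val b' hb fun i hi hi0 => hz (Fin.ext hi0 (b := z) ▸ hi)
  have hcj : c z ≤ c j := hc (Fin.le_def.2 (Nat.zero_le _))
  have hsj : s z ≤ s j := htop j hjb z hz
  calc b'.inf' hb c - c z ≤ c j - c z := by gcongr; exact inf'_le c hjb
    _ ≤ (c j - c z) * (s j - s z + 1) :=
      le_mul_of_one_le_right (sub_nonneg.2 hcj) (by linarith)
    _ ≤ _ := le_sup' (fun j => (c j - c z) * (s j - s z + 1)) (by simp [← hcard, hkj])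
    _ ≤ _ := le_max_right _ _
end

section
/- Let c₁ ≤ c₂ ≤ ... ≤ cₙ and scores s₁,...,sₙ, with n > k ≥ 1. Let σ̂ be a permutation sorting scores decreasingly, and let b' = {σ̂(1),...,σ̂(k)} be the beam of top-k scoring indices. If the cost increase min_{i∈b'} cᵢ − c₁ is strictly positive, then s_{σ̂(k)} ≥ s₁ and c_{σ̂(k)} > c₁, and consequently min_{i∈b'} cᵢ − c₁ ≤ (c_{σ̂(k)} − c₁)·max(0, s_{σ̂(k)} − s₁ + 1). -/
/-!
If the beam's cheapest cost exceeds `c₁`, then index `1` fell out of the beam, so its score is at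
most that of the last beam element `σ̂(k)`; and `c_{σ̂(k)}` is at least the beam minimum. Hence
the margin factor `max(0, s_{σ̂(k)} − s₁ + 1)` is at least `1` and the cost gap
`c_{σ̂(k)} − c₁` already dominates the cost increase.
-/

namespace BeamSearch

variable {n : ℕ}

def beam (σ : Equiv.Perm (Fin n)) (k : ℕ) : Finset (Fin n) :=
  (Finset.univ.filter fun i : Fin n => (i : ℕ) < k).image σ

theorem mem_beam_iff {σ : Equiv.Perm (Fin n)} {k : ℕ} {x : Fin n} :
    x ∈ beam σ k ↔ (σ.symm x : ℕ) < k := by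
  simp only [beam, Finset.mem_image, Finset.mem_filter, Finset.mem_univ, true_and]
  exact ⟨fun ⟨i, hi, hix⟩ => hix ▸ by simpa using hi, fun h => ⟨σ.symm x, h, σ.apply_symm_apply x⟩⟩

theorem score_le_of_not_mem_beam {σ : Equiv.Perm (Fin n)} {s : Fin n → ℝ}
    (hsort : ∀ i j : Fin n, i ≤ j → s (σ j) ≤ s (σ i)) {k : ℕ} (hkn : k < n)
    {x : Fin n} (hx : x ∉ beam σ k) : s x ≤ s (σ ⟨k - 1, by omega⟩) := by
  have hpos : k ≤ (σ.symm x : ℕ) := not_lt.mp (mt mem_beam_iff.mpr hx)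
  simpa using hsort ⟨k - 1, by omega⟩ (σ.symm x) (Fin.mk_le_of_le_val (by omega))

end BeamSearch

theorem le_mul_max_zero_add_one {d a t u : ℝ} (hd : d ≤ a) (ha : 0 ≤ a) (htu : t ≤ u) :
    d ≤ a * max 0 (u - t + 1) :=
  calc d ≤ a * 1 := by rwa [mul_one]
    _ ≤ a * max 0 (u - t + 1) := by gcongr; exact le_max_of_le_right (by linarith)

open BeamSearch in
/-- Cost-sensitive margin loss upper bounds the beam transition cost: with costs
sorted increasingly, `σ̂` a permutation sorting scores decreasingly, and
`b' = {σ̂(1),...,σ̂(k)}` the top-`k` beam, if the cost increase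
`min_{i∈b'} cᵢ − c₁` is strictly positive then `s_{σ̂(k)} ≥ s₁`, `c_{σ̂(k)} > c₁`,
and the cost increase is at most `(c_{σ̂(k)} − c₁)·max(0, s_{σ̂(k)} − s₁ + 1)`. -/
theorem stmt6 (n k : ℕ) (hk : 1 ≤ k) (hkn : k < n)
    (c s : Fin n → ℝ)
    (σ : Equiv.Perm (Fin n))
    (hsort : ∀ i j : Fin n, i ≤ j → s (σ j) ≤ s (σ i))
    (b' : Finset (Fin n))
    (hb' : b' = (Finset.univ.filter fun i : Fin n => (i : ℕ) < k).image σ)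
    (hb : b'.Nonempty)
    (hinc : 0 < b'.inf' hb c - c ⟨0, by omega⟩) :
    s ⟨0, by omega⟩ ≤ s (σ ⟨k - 1, by omega⟩) ∧
    c ⟨0, by omega⟩ < c (σ ⟨k - 1, by omega⟩) ∧
    b'.inf' hb c - c ⟨0, by omega⟩ ≤
      (c (σ ⟨k - 1, by omega⟩) - c ⟨0, by omega⟩) *
        max 0 (s (σ ⟨k - 1, by omega⟩) - s ⟨0, by omega⟩ + 1) := by
  replace hb' : b' = beam σ k := hb'
  have hfirst_out : (⟨0, by omega⟩ : Fin n) ∉ b' := fun h => by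
    linarith [Finset.inf'_le c h]
  have hlast_in : σ ⟨k - 1, by omega⟩ ∈ b' := by
    rw [hb', mem_beam_iff, Equiv.symm_apply_apply]
    exact Nat.sub_lt hk Nat.one_pos
  have hcost : b'.inf' hb c ≤ c (σ ⟨k - 1, by omega⟩) := Finset.inf'_le c hlast_in
  have hscore := score_le_of_not_mem_beam hsort hkn (hb' ▸ hfirst_out)
  exact ⟨hscore, by linarith, le_mul_max_zero_add_one (by linarith) (by linarith) hscore⟩
end

section
/- The function ℓ' : ℝ³ → ℝ defined by ℓ'(s) = ℓ(s)·𝟙[cost increase occurs] is not convex, where the setup is: n = 3 elements with costs c₁ = 0, c₂ = 1, c₃ = 1, beam size k = 2, the beam keeps the 2 top-scoring indices, a cost increase occurs iff index 1 is excluded from the beam, and ℓ is any surrogate loss that is strictly positive whenever a cost increase occurs. Specifically, for s = (1, 10, 0) and s' = (1, 0, 10) one has ℓ'(s) = ℓ'(s') = 0 yet ℓ'((s+s')/2) > 0, violating convexity. -/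
/-- Non-convexity from updating only on cost increases: with `n = 3` elements of
costs `(0,1,1)` and beam size `k = 2`, a cost increase occurs iff index `0` is
excluded from the top-2 beam (i.e. `s₀ < s₁` and `s₀ < s₂`). For any surrogate loss
`ℓ` that is strictly positive whenever a cost increase occurs, the gated loss
`ℓ'(s) = ℓ(s)·𝟙[cost increase]` vanishes at `s = (1,10,0)` and `s' = (1,0,10)` but is
positive at their midpoint `(1,5,5)`, hence `ℓ'` is not convex. -/
theorem stmt7 (ℓ : (Fin 3 → ℝ) → ℝ)
    (hpos : ∀ s : Fin 3 → ℝ, (s 0 < s 1 ∧ s 0 < s 2) → 0 < ℓ s)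
    (ℓ' : (Fin 3 → ℝ) → ℝ)
    (hℓ' : ∀ s : Fin 3 → ℝ, ℓ' s = if s 0 < s 1 ∧ s 0 < s 2 then ℓ s else 0) :
    ℓ' ![1, 10, 0] = 0 ∧ ℓ' ![1, 0, 10] = 0 ∧ 0 < ℓ' ![1, 5, 5] ∧
      ¬ ConvexOn ℝ Set.univ ℓ' := by
  have hs : ℓ' ![1, 10, 0] = 0 := by simp [hℓ']
  have hs' : ℓ' ![1, 0, 10] = 0 := by simp [hℓ']
  have hmid : 0 < ℓ' ![1, 5, 5] := by
    have hcost : (![1, 5, 5] : Fin 3 → ℝ) 0 < ![1, 5, 5] 1 ∧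
        (![1, 5, 5] : Fin 3 → ℝ) 0 < ![1, 5, 5] 2 := by norm_num [Matrix.cons_val_two]
    rw [hℓ', if_pos hcost]
    exact hpos _ hcost
  refine ⟨hs, hs', hmid, fun hconv => ?_⟩
  have hseg : (![1, 5, 5] : Fin 3 → ℝ) ∈ segment ℝ ![1, 10, 0] ![1, 0, 10] :=
    ⟨1 / 2, 1 / 2, by norm_num, by norm_num, by norm_num, by
      ext i; fin_cases i <;> norm_num⟩
  have hle := hconv.le_on_segment trivial trivial hseg
  rw [hs, hs', max_self] at hle
  exact hle.not_gt hmid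
end
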